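/- arXiv:1710.02037 — 9 statements merged into one kernel-verified Lean document; each statement's English description precedes it below -/
import Mathlib

section
/- Let d ≥ 2 be an integer, μ > 0, and D ∈ ℝ with √(dμ) ≠ -D. Set C = (e^{2√(dμ)} - e^{D+√(dμ)})/(e^{D+√(dμ)} - 1). Then C ∉ [-e^{2√(dμ)}, -1], the function u(r) = √(dμ)·(e^{2√(dμ)r} - C)/(e^{2√(dμ)r} + C) is well-defined and continuously differentiable on [0,1], satisfies u' = -u² + dμ on [0,1], and ∫₀¹ u(r) dr = D. -/
/-!
With `s = √(dμ)`, `u` solves the Riccati equation `u' = s² - u²`, and `-s r + log (e^{2sr} + C)` is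
an antiderivative of it. The constant `C` is chosen so that `e^{2s} + C = e^{D+s} (1 + C)`: the
denominator `e^{2sr} + C` thus has the same sign at both ends of `[0, 1]`, and being monotone it
never vanishes in between; and the integral telescopes to `log e^{D+s} - s = D`.
-/

open Real Set

noncomputable def riccatiSol (s C : ℝ) (r : ℝ) : ℝ :=
  s * (exp (2 * s * r) - C) / (exp (2 * s * r) + C)

section RiccatiSol

variable (s C : ℝ)

theorem hasDerivAt_exp_two_mul (r : ℝ) :
    HasDerivAt (fun x => exp (2 * s * x)) (exp (2 * s * r) * (2 * s)) r := by
  simpa using ((hasDerivAt_id r).const_mul (2 * s)).exp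

theorem hasDerivAt_riccatiSol {r : ℝ} (hr : exp (2 * s * r) + C ≠ 0) :
    HasDerivAt (riccatiSol s C) (-riccatiSol s C r ^ 2 + s ^ 2) r := by
  have hquot := (((hasDerivAt_exp_two_mul s r).sub_const C).const_mul s).div
    ((hasDerivAt_exp_two_mul s r).add_const C) hr
  refine hquot.congr_deriv ?_
  rw [riccatiSol]
  generalize exp (2 * s * r) = E at hr ⊢
  field_simp
  ring

theorem contDiffOn_riccatiSol {n : WithTop ℕ∞} {S : Set ℝ}
    (hS : ∀ r ∈ S, exp (2 * s * r) + C ≠ 0) : ContDiffOn ℝ n (riccatiSol s C) S := by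
  have hexp : ContDiff ℝ n fun r => exp (2 * s * r) := by fun_prop
  exact (contDiff_const.mul (hexp.sub contDiff_const)).contDiffOn.div
    (hexp.add contDiff_const).contDiffOn hS

theorem hasDerivAt_log_antideriv_riccatiSol {r : ℝ} (hr : exp (2 * s * r) + C ≠ 0) :
    HasDerivAt (fun x => -s * x + log (exp (2 * s * x) + C)) (riccatiSol s C r) r := by
  have hF := ((hasDerivAt_id r).const_mul (-s)).add
    (((hasDerivAt_exp_two_mul s r).add_const C).log hr)
  refine hF.congr_deriv ?_
  rw [riccatiSol]
  generalize exp (2 * s * r) = E at hr ⊢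
  field_simp
  ring

theorem integral_riccatiSol {a b : ℝ} (h : ∀ r ∈ uIcc a b, exp (2 * s * r) + C ≠ 0) :
    ∫ r in a..b, riccatiSol s C r =
      -s * (b - a) + log (exp (2 * s * b) + C) - log (exp (2 * s * a) + C) := by
  rw [intervalIntegral.integral_eq_sub_of_hasDerivAt
    (fun r hr => hasDerivAt_log_antideriv_riccatiSol s C (h r hr))
    ((contDiffOn_riccatiSol (n := 0) s C h).continuousOn.intervalIntegrable)]
  ring

theorem exp_two_mul_add_ne_zero {r : ℝ} (hs : 0 ≤ s) (hr : r ∈ Icc (0 : ℝ) 1)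
    (hC : C ∉ Icc (-exp (2 * s)) (-1)) : exp (2 * s * r) + C ≠ 0 := by
  intro h
  refine hC ⟨?_, ?_⟩
  · have : exp (2 * s * r) ≤ exp (2 * s) := exp_le_exp.mpr (by nlinarith [hr.2])
    linarith
  · have : 1 ≤ exp (2 * s * r) := one_le_exp (by nlinarith [hr.1])
    linarith

end RiccatiSol

noncomputable def boundaryConst (s D : ℝ) : ℝ :=
  (exp (2 * s) - exp (D + s)) / (exp (D + s) - 1)

section BoundaryConst

variable {s D : ℝ}

theorem exp_sub_one_ne_zero {x : ℝ} (hx : x ≠ 0) : exp x - 1 ≠ 0 :=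
  sub_ne_zero.mpr ((exp_eq_one_iff x).not.mpr hx)

theorem exp_two_mul_add_boundaryConst (hDs : D + s ≠ 0) :
    exp (2 * s) + boundaryConst s D = exp (D + s) * (1 + boundaryConst s D) := by
  have := exp_sub_one_ne_zero hDs
  rw [boundaryConst]
  field_simp
  ring

theorem one_add_boundaryConst_ne_zero (hs : s ≠ 0) (hDs : D + s ≠ 0) :
    1 + boundaryConst s D ≠ 0 := by
  have hDs' := exp_sub_one_ne_zero hDs
  rw [boundaryConst, one_add_div hDs', sub_add_sub_cancel']
  exact div_ne_zero (exp_sub_one_ne_zero (mul_ne_zero two_ne_zero hs)) hDs'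

end BoundaryConst

theorem notMem_Icc_of_add_eq_mul {a b c k : ℝ} (hk : 0 < k) (ha : a + c ≠ 0)
    (h : b + c = k * (a + c)) : c ∉ Icc (-b) (-a) := by
  rintro ⟨hb, ha'⟩
  rcases ha.lt_or_gt with hneg | hpos
  · nlinarith
  · linarith

theorem stmt_0 (d : ℕ) (hd : 2 ≤ d) (μ D : ℝ) (hμ : 0 < μ)
    (hne : Real.sqrt (d * μ) ≠ -D)
    (s : ℝ) (hs : s = Real.sqrt (d * μ))
    (C : ℝ) (hC : C = (Real.exp (2 * s) - Real.exp (D + s)) / (Real.exp (D + s) - 1))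
    (u : ℝ → ℝ)
    (hu : u = fun r => s * (Real.exp (2 * s * r) - C) / (Real.exp (2 * s * r) + C)) :
    C ∉ Set.Icc (-(Real.exp (2 * s))) (-1) ∧
    ContDiffOn ℝ 1 u (Set.Icc 0 1) ∧
    (∀ r ∈ Set.Icc (0:ℝ) 1,
      HasDerivWithinAt u (-(u r) ^ 2 + d * μ) (Set.Icc 0 1) r) ∧
    ∫ r in (0:ℝ)..1, u r = D := by
  have hdμ : 0 < (d : ℝ) * μ := mul_pos (by exact_mod_cast (by omega : 0 < d)) hμ
  have hs0 : 0 < s := hs ▸ sqrt_pos.mpr hdμ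
  have hs2 : s ^ 2 = d * μ := hs ▸ sq_sqrt hdμ.le
  have hDs : D + s ≠ 0 := fun h => hne (by linarith)
  obtain rfl : C = boundaryConst s D := hC
  have hend := exp_two_mul_add_boundaryConst hDs
  have h1C := one_add_boundaryConst_ne_zero hs0.ne' hDs
  have hCmem : boundaryConst s D ∉ Icc (-exp (2 * s)) (-1) :=
    notMem_Icc_of_add_eq_mul (exp_pos _) h1C hend
  have hden : ∀ r ∈ Icc (0 : ℝ) 1, exp (2 * s * r) + boundaryConst s D ≠ 0 :=
    fun r hr => exp_two_mul_add_ne_zero s _ hs0.le hr hCmem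
  obtain rfl : u = riccatiSol s (boundaryConst s D) := hu
  refine ⟨hCmem, contDiffOn_riccatiSol s _ hden, fun r hr => ?_, ?_⟩
  · exact hs2 ▸ (hasDerivAt_riccatiSol s _ (hden r hr)).hasDerivWithinAt
  · rw [integral_riccatiSol s _ (by rwa [uIcc_of_le zero_le_one]), mul_one, mul_zero, exp_zero,
      hend, log_mul (exp_ne_zero _) h1C, log_exp]
    ring
end

section
/- Let d ≥ 2 be an integer and λ ∈ (0, π²/d). Set C = arctan((cos√(dλ) - e^D)/sin√(dλ)) for a given D ∈ ℝ. Then cos(C + √(dλ) r) > 0 for all r ∈ [0,1], the function u(r) = -√(dλ)·tan(C + √(dλ) r) is continuously differentiable on [0,1], satisfies u' = -u² - dλ on [0,1], and ∫₀¹ u(r) dr = D. -/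
/-!
With `s = √(dλ) ∈ (0, π)`, the function `u r = -s tan (C + s r)` is the logarithmic derivative of
`cos (C + s r)`, and `tan' = 1 + tan²` turns this into the Riccati equation `u' = -u² - s²`.
The choice of `C` is exactly the condition `cos (C + s) = e^D cos C`, so `∫₀¹ u = D`; it also
gives `tan C < cot s`, i.e. `C + s < π/2`, which keeps `C + s r` inside `(-π/2, π/2)`.
-/

open Real Set

lemma hasDerivAt_log_cos_affine {s C r : ℝ} (h : cos (C + s * r) ≠ 0) :
    HasDerivAt (fun x => log (cos (C + s * x))) (-s * tan (C + s * r)) r := by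
  have hlin : HasDerivAt (fun x : ℝ => C + s * x) s r := by
    simpa using ((hasDerivAt_id r).const_mul s).const_add C
  refine ((hasDerivAt_log h).comp r ((hasDerivAt_cos _).comp r hlin)).congr_deriv ?_
  rw [tan_eq_sin_div_cos]
  field_simp

lemma hasDerivAt_neg_mul_tan_affine {s C r : ℝ} (h : cos (C + s * r) ≠ 0) :
    HasDerivAt (fun x => -s * tan (C + s * x)) (-(-s * tan (C + s * r)) ^ 2 - s ^ 2) r := by
  have hlin : HasDerivAt (fun x : ℝ => C + s * x) s r := by
    simpa using ((hasDerivAt_id r).const_mul s).const_add C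
  refine (((hasDerivAt_tan h).comp r hlin).const_mul (-s)).congr_deriv ?_
  rw [tan_eq_sin_div_cos]
  field_simp
  linear_combination s ^ 2 * sin_sq_add_cos_sq (C + s * r)

lemma integral_neg_mul_tan_affine {s C a b : ℝ} (h : ∀ r ∈ uIcc a b, cos (C + s * r) ≠ 0) :
    ∫ r in a..b, -s * tan (C + s * r) = log (cos (C + s * b)) - log (cos (C + s * a)) := by
  have hcont : ContinuousOn (fun r => -s * tan (C + s * r)) (uIcc a b) := fun r hr =>
    ((hasDerivAt_neg_mul_tan_affine (h r hr)).continuousAt).continuousWithinAt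
  exact intervalIntegral.integral_eq_sub_of_hasDerivAt
    (fun r hr => hasDerivAt_log_cos_affine (h r hr)) hcont.intervalIntegrable

lemma cos_add_eq_mul_cos_of_tan_eq {C s a : ℝ} (hC : cos C ≠ 0) (hs : sin s ≠ 0)
    (htan : tan C = (cos s - a) / sin s) : cos (C + s) = a * cos C := by
  rw [tan_eq_sin_div_cos, div_eq_div_iff hC hs] at htan
  rw [cos_add]
  field_simp
  linear_combination -htan

lemma arctan_add_lt_pi_div_two {s a : ℝ} (hs0 : 0 < s) (hsπ : s < π) (ha : 0 < a) :
    arctan ((cos s - a) / sin s) + s < π / 2 := by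
  have hsin : 0 < sin s := sin_pos_of_pos_of_lt_pi hs0 hsπ
  have htan : tan (arctan ((cos s - a) / sin s)) < tan (π / 2 - s) := by
    rw [tan_arctan, tan_pi_div_two_sub, tan_eq_sin_div_cos, inv_div]
    exact div_lt_div_of_pos_right (by linarith) hsin
  have := strictMonoOn_tan.lt_iff_lt
    ⟨neg_pi_div_two_lt_arctan _, arctan_lt_pi_div_two _⟩ ⟨by linarith, by linarith⟩ |>.1 htan
  linarith

lemma cos_arctan_add_mul_pos {s a r : ℝ} (hs0 : 0 < s) (hsπ : s < π) (ha : 0 < a)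
    (hr : r ∈ Icc (0 : ℝ) 1) : 0 < cos (arctan ((cos s - a) / sin s) + s * r) := by
  have hlow := neg_pi_div_two_lt_arctan ((cos s - a) / sin s)
  have hup := arctan_add_lt_pi_div_two hs0 hsπ ha
  apply cos_pos_of_mem_Ioo
  constructor <;> nlinarith [hr.1, hr.2]

theorem stmt_2_general (d : ℕ) (lam D : ℝ)
    (hlam : 0 < lam) (hlam' : lam < Real.pi ^ 2 / d)
    (s : ℝ) (hs : s = Real.sqrt (d * lam))
    (C : ℝ) (hC : C = Real.arctan ((Real.cos s - Real.exp D) / Real.sin s))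
    (u : ℝ → ℝ) (hu : u = fun r => -s * Real.tan (C + s * r)) :
    (∀ r ∈ Set.Icc (0:ℝ) 1, 0 < Real.cos (C + s * r)) ∧
    ContDiffOn ℝ 1 u (Set.Icc 0 1) ∧
    (∀ r ∈ Set.Icc (0:ℝ) 1,
      HasDerivWithinAt u (-(u r) ^ 2 - d * lam) (Set.Icc 0 1) r) ∧
    ∫ r in (0:ℝ)..1, u r = D := by
  have hd : (0 : ℝ) < d := by
    -- `π ^ 2 / 0 = 0`, so `d = 0` would force `lam < 0`
    rcases (Nat.cast_nonneg d : (0 : ℝ) ≤ d).eq_or_lt with h | h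
    · rw [← h, div_zero] at hlam'; linarith
    · exact h
  have hdlam : 0 < (d : ℝ) * lam := mul_pos hd hlam
  have hs0 : 0 < s := hs ▸ sqrt_pos.2 hdlam
  have hsπ : s < π := hs ▸ (sqrt_lt' pi_pos).2 (by rwa [lt_div_iff₀ hd, mul_comm] at hlam')
  have hs2 : s ^ 2 = d * lam := hs ▸ sq_sqrt hdlam.le
  have hcos : ∀ r ∈ Icc (0 : ℝ) 1, 0 < cos (C + s * r) :=
    fun r hr => hC ▸ cos_arctan_add_mul_pos hs0 hsπ (exp_pos D) hr
  have hderiv : ∀ r ∈ Icc (0 : ℝ) 1, HasDerivAt u (-(u r) ^ 2 - d * lam) r := fun r hr => by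
    subst hu; rw [← hs2]; exact hasDerivAt_neg_mul_tan_affine (hcos r hr).ne'
  have hcosC : cos C ≠ 0 := by simpa using (hcos 0 (by simp)).ne'
  have hend : cos (C + s) = exp D * cos C := cos_add_eq_mul_cos_of_tan_eq hcosC
    (sin_pos_of_pos_of_lt_pi hs0 hsπ).ne' (by rw [hC, tan_arctan])
  refine ⟨hcos, fun r hr => ?_, fun r hr => (hderiv r hr).hasDerivWithinAt, ?_⟩
  · subst hu
    have hlin : ContDiffAt ℝ 1 (fun x : ℝ => C + s * x) r := by fun_prop
    exact (contDiffAt_const.mul ((contDiffAt_tan.2 (hcos r hr).ne').comp r hlin)).contDiffWithinAt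
  · rw [hu, integral_neg_mul_tan_affine (fun r hr => (hcos r (by simpa using hr)).ne'),
      mul_one, mul_zero, add_zero, hend, log_mul (exp_ne_zero D) hcosC, log_exp]
    ring

theorem stmt_2 (d : ℕ) (hd : 2 ≤ d) (lam D : ℝ)
    (hlam : 0 < lam) (hlam' : lam < Real.pi ^ 2 / d)
    (s : ℝ) (hs : s = Real.sqrt (d * lam))
    (C : ℝ) (hC : C = Real.arctan ((Real.cos s - Real.exp D) / Real.sin s))
    (u : ℝ → ℝ) (hu : u = fun r => -s * Real.tan (C + s * r)) :
    (∀ r ∈ Set.Icc (0:ℝ) 1, 0 < Real.cos (C + s * r)) ∧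
    ContDiffOn ℝ 1 u (Set.Icc 0 1) ∧
    (∀ r ∈ Set.Icc (0:ℝ) 1,
      HasDerivWithinAt u (-(u r) ^ 2 - d * lam) (Set.Icc 0 1) r) ∧
    ∫ r in (0:ℝ)..1, u r = D :=
  stmt_2_general d lam D hlam hlam' s hs C hC u hu
end

section
/- Let d ≥ 2 be an integer and λ ∈ ℝ. There exists a continuously differentiable function u : [0,1] → ℝ with u'(r) = -u(r)² - dλ for all r ∈ [0,1] and ∫₀¹ u(r) dr = D if and only if λ < π²/d. Moreover, when λ < π²/d this solution is unique. -/
/-!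
With `c = d λ`, the substitution `u = y' / y` turns `u' = -u² - c` into `y'' + c y = 0`, and then
`∫₀¹ u = log (y 1 / y 0)`. For `c < π²` the equation `y'' + c y = 0` has a solution `s` with
`s 0 = 0`, `s 1 = 1` and `s > 0` on `(0, 1]` (a multiple of `sinh (√(-c) r)`, `r` or
`sin (√c r)`), so `y r = s (1 - r) + e^D s r` is positive on `[0, 1]` with `y 1 / y 0 = e^D`.
Conversely, if `c = ω² > 0` then `arctan (u / ω)` decreases at speed exactly `ω` while staying in
`(-π/2, π/2)`, which forces `ω < π`. Finally, two solutions differ by `w = u - v` with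
`w' = -(u + v) w`, so `w` is `w 0` times a positive function and `∫ w = 0` forces `w = 0`.
-/

open Real Set

variable {c : ℝ}

theorem constant_of_hasDerivWithinAt_Icc_zero {f : ℝ → ℝ} {a b : ℝ}
    (hf : ∀ x ∈ Icc a b, HasDerivWithinAt f 0 (Icc a b) x) : ∀ x ∈ Icc a b, f x = f a :=
  constant_of_has_deriv_right_zero (HasDerivWithinAt.continuousOn hf) fun x hx =>
    (hf x (Ico_subset_Icc_self hx)).mono_of_mem_nhdsWithin
      (Filter.mem_of_superset (Icc_mem_nhdsGE hx.2) (Icc_subset_Icc_left hx.1))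

theorem ContinuousOn.exists_hasDerivAt_Icc {f : ℝ → ℝ} {a b : ℝ} (hab : a ≤ b)
    (hf : ContinuousOn f (Icc a b)) : ∃ F : ℝ → ℝ, ∀ x ∈ Icc a b, HasDerivAt F (f x) x := by
  have hg : Continuous fun x => f (projIcc a b hab x) :=
    hf.comp_continuous (continuous_subtype_val.comp continuous_projIcc) fun x =>
      (projIcc a b hab x).2
  refine ⟨fun x => ∫ t in a..x, f (projIcc a b hab t), fun x hx => ?_⟩
  simpa [projIcc_of_mem hab hx] using (hg.integral_hasStrictDerivAt a x).hasDerivAt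

theorem contDiff_one_of_hasDerivAt {f f' : ℝ → ℝ} (hf : ∀ x, HasDerivAt f (f' x) x)
    (hf' : Continuous f') : ContDiff ℝ 1 f :=
  contDiff_one_iff_deriv.2
    ⟨fun x => (hf x).differentiableAt, by rwa [funext fun x => (hf x).deriv]⟩

structure IsOscillatorSolution (c : ℝ) (y y' : ℝ → ℝ) : Prop where
  hasDerivAt : ∀ r, HasDerivAt y (y' r) r
  hasDerivAt_deriv : ∀ r, HasDerivAt y' (-(c * y r)) r

namespace IsOscillatorSolution

variable {y y' z z' : ℝ → ℝ}

theorem continuous (h : IsOscillatorSolution c y y') : Continuous y :=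
  continuous_iff_continuousAt.2 fun r => (h.hasDerivAt r).continuousAt

theorem contDiff (h : IsOscillatorSolution c y y') : ContDiff ℝ 1 y :=
  contDiff_one_of_hasDerivAt h.hasDerivAt <|
    continuous_iff_continuousAt.2 fun r => (h.hasDerivAt_deriv r).continuousAt

theorem contDiff_deriv (h : IsOscillatorSolution c y y') : ContDiff ℝ 1 y' :=
  contDiff_one_of_hasDerivAt h.hasDerivAt_deriv (continuous_const.mul h.continuous).neg

theorem add (hy : IsOscillatorSolution c y y') (hz : IsOscillatorSolution c z z') :
    IsOscillatorSolution c (fun r => y r + z r) (fun r => y' r + z' r) where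
  hasDerivAt r := (hy.hasDerivAt r).add (hz.hasDerivAt r)
  hasDerivAt_deriv r :=
    ((hy.hasDerivAt_deriv r).add (hz.hasDerivAt_deriv r)).congr_deriv (by ring)

theorem const_mul (h : IsOscillatorSolution c y y') (a : ℝ) :
    IsOscillatorSolution c (fun r => a * y r) (fun r => a * y' r) where
  hasDerivAt r := (h.hasDerivAt r).const_mul a
  hasDerivAt_deriv r := ((h.hasDerivAt_deriv r).const_mul a).congr_deriv (by ring)

theorem comp_one_sub (h : IsOscillatorSolution c y y') :
    IsOscillatorSolution c (fun r => y (1 - r)) (fun r => -y' (1 - r)) where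
  hasDerivAt r := (h.hasDerivAt (1 - r)).comp_const_sub 1 r
  hasDerivAt_deriv r :=
    ((h.hasDerivAt_deriv (1 - r)).comp_const_sub 1 r).neg.congr_deriv (by ring)

theorem riccati_div (h : IsOscillatorSolution c y y') (hpos : ∀ r ∈ Icc (0 : ℝ) 1, 0 < y r) :
    ContDiffOn ℝ 1 (fun r => y' r / y r) (Icc 0 1) ∧
      (∀ r ∈ Icc (0 : ℝ) 1,
        HasDerivWithinAt (fun r => y' r / y r) (-(y' r / y r) ^ 2 - c) (Icc 0 1) r) ∧
      ∫ r in (0 : ℝ)..1, y' r / y r = log (y 1) - log (y 0) := by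
  have hne : ∀ r ∈ Icc (0 : ℝ) 1, y r ≠ 0 := fun r hr => (hpos r hr).ne'
  have hcd : ContDiffOn ℝ 1 (fun r => y' r / y r) (Icc 0 1) :=
    h.contDiff_deriv.contDiffOn.div h.contDiff.contDiffOn hne
  refine ⟨hcd, fun r hr => ?_, ?_⟩
  · refine (((h.hasDerivAt_deriv r).div (h.hasDerivAt r) (hne r hr)).congr_deriv ?_
      ).hasDerivWithinAt
    field_simp [hne r hr]
    ring
  · rw [← uIcc_of_le zero_le_one] at hne hcd
    exact intervalIntegral.integral_eq_sub_of_hasDerivAt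
      (fun r hr => (h.hasDerivAt r).log (hne r hr)) (hcd.continuousOn.intervalIntegrable)

end IsOscillatorSolution

theorem isOscillatorSolution_sin (ω : ℝ) :
    IsOscillatorSolution (ω ^ 2) (fun r => sin (ω * r)) (fun r => ω * cos (ω * r)) where
  hasDerivAt r := by
    simpa [mul_comm] using ((hasDerivAt_id r).const_mul ω).sin
  hasDerivAt_deriv r :=
    ((((hasDerivAt_id r).const_mul ω).cos).const_mul ω).congr_deriv (by simp; ring)

theorem isOscillatorSolution_sinh (ω : ℝ) :
    IsOscillatorSolution (-ω ^ 2) (fun r => sinh (ω * r)) (fun r => ω * cosh (ω * r)) where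
  hasDerivAt r := by
    simpa [mul_comm] using ((hasDerivAt_id r).const_mul ω).sinh
  hasDerivAt_deriv r :=
    ((((hasDerivAt_id r).const_mul ω).cosh).const_mul ω).congr_deriv (by simp; ring)

theorem isOscillatorSolution_id : IsOscillatorSolution 0 id 1 where
  hasDerivAt := hasDerivAt_id
  hasDerivAt_deriv r := (hasDerivAt_const r (1 : ℝ)).congr_deriv (by simp)

theorem exists_isOscillatorSolution_pos (hc : c < π ^ 2) : ∃ s s' : ℝ → ℝ,
    IsOscillatorSolution c s s' ∧ s 0 = 0 ∧ s 1 = 1 ∧ ∀ r ∈ Ioc (0 : ℝ) 1, 0 < s r := by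
  rcases lt_trichotomy c 0 with hc0 | rfl | hc0
  · obtain ⟨ω, hω, rfl⟩ : ∃ ω, 0 < ω ∧ c = -ω ^ 2 :=
      ⟨√(-c), sqrt_pos.2 (neg_pos.2 hc0), by rw [sq_sqrt (neg_nonneg.2 hc0.le), neg_neg]⟩
    have hsinh : 0 < sinh ω := sinh_pos_iff.2 hω
    refine ⟨_, _, (isOscillatorSolution_sinh ω).const_mul (sinh ω)⁻¹, by simp,
      by simp [hsinh.ne'], fun r hr => ?_⟩
    exact mul_pos (inv_pos.2 hsinh) (sinh_pos_iff.2 (mul_pos hω hr.1))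
  · exact ⟨id, 1, isOscillatorSolution_id, rfl, rfl, fun r hr => hr.1⟩
  · obtain ⟨ω, hω, rfl⟩ : ∃ ω, 0 < ω ∧ c = ω ^ 2 := ⟨√c, sqrt_pos.2 hc0, (sq_sqrt hc0.le).symm⟩
    have hωπ : ω < π := (pow_lt_pow_iff_left₀ hω.le pi_pos.le two_ne_zero).1 hc
    have hsin : 0 < sin ω := sin_pos_of_pos_of_lt_pi hω hωπ
    refine ⟨_, _, (isOscillatorSolution_sin ω).const_mul (sin ω)⁻¹, by simp,
      by simp [hsin.ne'], fun r hr => ?_⟩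
    exact mul_pos (inv_pos.2 hsin) (sin_pos_of_pos_of_lt_pi (mul_pos hω hr.1)
      (by nlinarith [hr.2]))

theorem exists_riccati_integral_eq (hc : c < π ^ 2) (D : ℝ) :
    ∃ u : ℝ → ℝ, ContDiffOn ℝ 1 u (Icc 0 1) ∧
      (∀ r ∈ Icc (0 : ℝ) 1, HasDerivWithinAt u (-(u r) ^ 2 - c) (Icc 0 1) r) ∧
      ∫ r in (0 : ℝ)..1, u r = D := by
  obtain ⟨s, s', hs, hs0, hs1, hpos⟩ := exists_isOscillatorSolution_pos hc
  have hnonneg : ∀ r ∈ Icc (0 : ℝ) 1, 0 ≤ s r := fun r hr => by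
    rcases hr.1.eq_or_lt with rfl | h
    · exact hs0.ge
    · exact (hpos r ⟨h, hr.2⟩).le
  have hypos : ∀ r ∈ Icc (0 : ℝ) 1, 0 < s (1 - r) + exp D * s r := fun r hr => by
    rcases hr.1.eq_or_lt with rfl | h
    · simp [hs0, hs1]
    · exact add_pos_of_nonneg_of_pos (hnonneg _ ⟨by linarith [hr.2], by linarith⟩)
        (mul_pos (exp_pos D) (hpos r ⟨h, hr.2⟩))
  obtain ⟨hcd, hder, hint⟩ := (hs.comp_one_sub.add (hs.const_mul (exp D))).riccati_div hypos
  exact ⟨_, hcd, hder, by simp [hint, hs0, hs1]⟩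

theorem lt_pi_sq_of_riccati {u : ℝ → ℝ}
    (hu : ∀ r ∈ Icc (0 : ℝ) 1, HasDerivWithinAt u (-(u r) ^ 2 - c) (Icc 0 1) r) :
    c < π ^ 2 := by
  rcases le_or_gt c 0 with hc | hc
  · nlinarith [pi_pos]
  obtain ⟨ω, hω, rfl⟩ : ∃ ω, 0 < ω ∧ c = ω ^ 2 := ⟨√c, sqrt_pos.2 hc, (sq_sqrt hc.le).symm⟩
  have hconst := constant_of_hasDerivWithinAt_Icc_zero (f := fun r => arctan (u r / ω) + ω * r)
    fun r hr => by
      refine (((hasDerivAt_arctan _).comp_hasDerivWithinAt r ((hu r hr).div_const ω)).add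
        ((hasDerivAt_id r).const_mul ω).hasDerivWithinAt).congr_deriv ?_
      field_simp
      ring
  have h1 := hconst 1 (right_mem_Icc.2 zero_le_one)
  simp only [mul_one, mul_zero, add_zero] at h1
  nlinarith [arctan_lt_pi_div_two (u 0 / ω), neg_pi_div_two_lt_arctan (u 1 / ω)]

theorem eqOn_of_riccati_of_integral_eq {u v : ℝ → ℝ}
    (hu : ∀ r ∈ Icc (0 : ℝ) 1, HasDerivWithinAt u (-(u r) ^ 2 - c) (Icc 0 1) r)
    (hv : ∀ r ∈ Icc (0 : ℝ) 1, HasDerivWithinAt v (-(v r) ^ 2 - c) (Icc 0 1) r)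
    (huv : ∫ r in (0 : ℝ)..1, u r = ∫ r in (0 : ℝ)..1, v r) : EqOn u v (Icc 0 1) := by
  have huc := HasDerivWithinAt.continuousOn hu
  have hvc := HasDerivWithinAt.continuousOn hv
  obtain ⟨P, hP⟩ := (huc.add hvc).exists_hasDerivAt_Icc zero_le_one
  have hPc : ContinuousOn P (Icc 0 1) := fun r hr => (hP r hr).continuousAt.continuousWithinAt
  have hconst := constant_of_hasDerivWithinAt_Icc_zero (f := fun r => (u r - v r) * exp (P r))
    fun r hr => by
      refine (((hu r hr).sub (hv r hr)).mul (hP r hr).exp.hasDerivWithinAt).congr_deriv ?_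
      simp only [Pi.add_apply, Pi.sub_apply]
      ring
  have hw : ∀ r ∈ Icc (0 : ℝ) 1, u r - v r = (u 0 - v 0) * exp (P 0 - P r) := fun r hr => by
    rw [exp_sub, mul_div_assoc', ← hconst r hr, mul_div_cancel_right₀ _ (exp_ne_zero _)]
  have hdiff : ∫ r in (0 : ℝ)..1, (u r - v r) = 0 := by
    rw [intervalIntegral.integral_sub (huc.intervalIntegrable_of_Icc zero_le_one)
      (hvc.intervalIntegrable_of_Icc zero_le_one), huv, sub_self]
  have hexp : 0 < ∫ r in (0 : ℝ)..1, exp (P 0 - P r) :=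
    intervalIntegral.intervalIntegral_pos_of_pos_on
      ((continuous_exp.comp_continuousOn (continuousOn_const.sub hPc)).intervalIntegrable_of_Icc
        zero_le_one) (fun _ _ => exp_pos _) one_pos
  rw [intervalIntegral.integral_congr fun r hr => hw r (by rwa [uIcc_of_le zero_le_one] at hr),
    intervalIntegral.integral_const_mul] at hdiff
  have h0 : u 0 - v 0 = 0 := (mul_eq_zero.1 hdiff).resolve_right hexp.ne'
  intro r hr
  simpa [h0, sub_eq_zero] using hw r hr

theorem stmt_4 (d : ℕ) (hd : 2 ≤ d) (lam D : ℝ) :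
    ((∃ u : ℝ → ℝ, ContDiffOn ℝ 1 u (Set.Icc 0 1) ∧
        (∀ r ∈ Set.Icc (0:ℝ) 1,
          HasDerivWithinAt u (-(u r) ^ 2 - d * lam) (Set.Icc 0 1) r) ∧
        ∫ r in (0:ℝ)..1, u r = D) ↔ lam < Real.pi ^ 2 / d) ∧
    (∀ u v : ℝ → ℝ,
      (ContDiffOn ℝ 1 u (Set.Icc 0 1) ∧
        (∀ r ∈ Set.Icc (0:ℝ) 1,
          HasDerivWithinAt u (-(u r) ^ 2 - d * lam) (Set.Icc 0 1) r) ∧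
        ∫ r in (0:ℝ)..1, u r = D) →
      (ContDiffOn ℝ 1 v (Set.Icc 0 1) ∧
        (∀ r ∈ Set.Icc (0:ℝ) 1,
          HasDerivWithinAt v (-(v r) ^ 2 - d * lam) (Set.Icc 0 1) r) ∧
        ∫ r in (0:ℝ)..1, v r = D) →
      Set.EqOn u v (Set.Icc 0 1)) := by
  have hd0 : (0 : ℝ) < d := Nat.cast_pos.2 (by omega)
  have hlam : lam < π ^ 2 / d ↔ d * lam < π ^ 2 := by rw [lt_div_iff₀ hd0, mul_comm]
  refine ⟨⟨fun ⟨u, _, hu, _⟩ => hlam.2 (lt_pi_sq_of_riccati hu),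
    fun h => exists_riccati_integral_eq (hlam.1 h) D⟩, ?_⟩
  rintro u v ⟨-, hu, hu'⟩ ⟨-, hv, hv'⟩
  exact eqOn_of_riccati_of_integral_eq hu hv (hu'.trans hv'.symm)
end

section
/- Let d ≥ 2, D ∈ ℝ, and λ = 0 with D ≠ 0. Set C = 1/(e^D - 1). Then C ∉ [-1, 0], and the function u(r) = 1/(C + r) is continuously differentiable on [0,1], satisfies u' = -u², and ∫₀¹ u(r) dr = D. Moreover, C is the unique real number outside [-1,0] with ln((C+1)/C) = D. -/
open Real Set

/-!
The map `C ↦ (C + 1) / C = 1 + C⁻¹` is injective on `C ≠ 0`, and it is positive exactly when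
`C ∉ [-1, 0]`; on that set `log ((C + 1) / C) = D` therefore has the single solution
`(C + 1) / C = exp D`, i.e. `C = 1 / (exp D - 1)`, which needs `exp D ≠ 1`, i.e. `D ≠ 0`.
For such `C` the shifted interval `C + [0, 1]` avoids `0`, so `u = 1 / (C + ·)` is smooth there,
`u' = -u²`, and `∫₀¹ u = log ((C + 1) / C) = D`.
-/

lemma notMem_Icc_neg_one_zero_iff {C : ℝ} : C ∉ Icc (-1 : ℝ) 0 ↔ 0 < (C + 1) / C := by
  rw [div_pos_iff, mem_Icc]
  constructor
  · intro h
    rcases lt_or_ge 0 C with hC | hC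
    · exact .inl ⟨by linarith, hC⟩
    · have : C < -1 := by
        by_contra! h'
        exact h ⟨h', hC⟩
      exact .inr ⟨by linarith, by linarith⟩
  · rintro (⟨-, hC⟩ | ⟨hC, -⟩) ⟨h₁, h₂⟩ <;> linarith

lemma add_ne_zero_of_notMem_Icc {C r : ℝ} (hC : C ∉ Icc (-1 : ℝ) 0) (hr : r ∈ Icc (0 : ℝ) 1) :
    C + r ≠ 0 := by
  intro h
  exact hC ⟨by linarith [hr.2], by linarith [hr.1]⟩

lemma add_one_div_injOn : InjOn (fun C : ℝ => (C + 1) / C) {0}ᶜ := by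
  intro a ha b hb h
  simpa only [add_div, div_self ha, div_self hb, add_right_inj, one_div, inv_inj] using h

lemma add_one_div_one_div_exp_sub_one {D : ℝ} (hD : D ≠ 0) :
    (1 / (exp D - 1) + 1) / (1 / (exp D - 1)) = exp D := by
  have : exp D - 1 ≠ 0 := sub_ne_zero.2 ((exp_eq_one_iff D).not.2 hD)
  field_simp
  ring

lemma hasDerivAt_one_div_const_add {C r : ℝ} (h : C + r ≠ 0) :
    HasDerivAt (fun x => 1 / (C + x)) (-(1 / (C + r)) ^ 2) r := by
  simpa only [one_div, neg_div, inv_pow] using ((hasDerivAt_id' r).const_add C).fun_inv h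

lemma integral_one_div_const_add {C a b : ℝ} (h : 0 ∉ uIcc (C + a) (C + b)) :
    ∫ r in a..b, 1 / (C + r) = log ((C + b) / (C + a)) := by
  rw [intervalIntegral.integral_comp_add_left (fun x => 1 / x) C, integral_one_div h]

theorem stmt_5_general (D : ℝ) (hD : D ≠ 0)
    (C : ℝ) (hC : C = 1 / (Real.exp D - 1))
    (u : ℝ → ℝ) (hu : u = fun r => 1 / (C + r)) :
    C ∉ Set.Icc (-1 : ℝ) 0 ∧
    ContDiffOn ℝ 1 u (Set.Icc 0 1) ∧
    (∀ r ∈ Set.Icc (0:ℝ) 1,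
      HasDerivWithinAt u (-(u r) ^ 2) (Set.Icc 0 1) r) ∧
    (∫ r in (0:ℝ)..1, u r = D) ∧
    ∀ C' : ℝ, C' ∉ Set.Icc (-1 : ℝ) 0 →
      Real.log ((C' + 1) / C') = D → C' = C := by
  have hratio : (C + 1) / C = exp D := hC ▸ add_one_div_one_div_exp_sub_one hD
  have hCmem : C ∉ Icc (-1 : ℝ) 0 := notMem_Icc_neg_one_zero_iff.2 (hratio ▸ exp_pos D)
  have hne : ∀ r ∈ Icc (0 : ℝ) 1, C + r ≠ 0 := fun r hr => add_ne_zero_of_notMem_Icc hCmem hr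
  subst hu
  refine ⟨hCmem, contDiffOn_const.div (contDiffOn_const.add contDiffOn_id) hne,
    fun r hr => (hasDerivAt_one_div_const_add (hne r hr)).hasDerivWithinAt, ?_, ?_⟩
  · have h0 : (0 : ℝ) ∉ uIcc (C + 0) (C + 1) := by
      rw [uIcc_of_le (by linarith)]
      rintro ⟨h₁, h₂⟩
      exact hCmem ⟨by linarith, by linarith⟩
    rw [integral_one_div_const_add h0, add_zero, hratio, log_exp]
  · intro C' hC' hlog
    have hC'pos := notMem_Icc_neg_one_zero_iff.1 hC'
    have hC'0 : C' ≠ 0 := by rintro rfl; simp at hC'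
    have hC0 : C ≠ 0 := by rintro rfl; simp at hCmem
    refine add_one_div_injOn hC'0 hC0 (?_ : (C' + 1) / C' = (C + 1) / C)
    rw [hratio, ← hlog, exp_log hC'pos]

theorem stmt_5 (d : ℕ) (hd : 2 ≤ d) (D : ℝ) (hD : D ≠ 0)
    (C : ℝ) (hC : C = 1 / (Real.exp D - 1))
    (u : ℝ → ℝ) (hu : u = fun r => 1 / (C + r)) :
    C ∉ Set.Icc (-1 : ℝ) 0 ∧
    ContDiffOn ℝ 1 u (Set.Icc 0 1) ∧
    (∀ r ∈ Set.Icc (0:ℝ) 1,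
      HasDerivWithinAt u (-(u r) ^ 2) (Set.Icc 0 1) r) ∧
    (∫ r in (0:ℝ)..1, u r = D) ∧
    ∀ C' : ℝ, C' ∉ Set.Icc (-1 : ℝ) 0 →
      Real.log ((C' + 1) / C') = D → C' = C :=
  stmt_5_general D hD C hC u hu
end

section
/- Let d ≥ 2 and D ∈ ℝ with D ≠ 0. With μ = -λ > 0 and C_- = (e^{2√(dμ)} - e^{D+√(dμ)})/(e^{D+√(dμ)} - 1), the limit as λ → 0⁻ of |ln(((e^{√(dμ)}/√(-C_-) + 1)(-1/√(-C_-) + 1))/((1 - e^{√(dμ)}/√(-C_-))(1 + 1/√(-C_-))))| equals |D|. -/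
/-!
Put `s = √(dμ)`, which tends to `0⁺` as `λ → 0⁻`, and `r = √(-C_-)`. By the definition of `C_-`,
`r² (e^{D+s} - 1) = e^{D+s} - e^{2s}`, and this identity turns the quotient inside the logarithm
into `(e^s + r)² / (e^{D+s} (r + 1)²)` once `0 < s < |D|`. The latter is continuous in `s` at `0`,
where `C_- = -1`, so `r = 1` and its value is `4 / (4 e^D) = e^{-D}`; hence the limit is `|-D| = |D|`.
-/

open Real Set Filter Topology

/-- The quotient inside the logarithm, with `t = e^{√(dμ)}` and `r = √(-C_-)`. -/
noncomputable def logArg (t r : ℝ) : ℝ := ((t / r + 1) * (-1 / r + 1)) / ((1 - t / r) * (1 + 1 / r))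

/-- `C_-` as a function of `s = √(dμ)`. -/
noncomputable def cMinus (D s : ℝ) : ℝ := (exp (2 * s) - exp (D + s)) / (exp (D + s) - 1)

lemma logArg_eq_of_sq_mul {t u r : ℝ} (hr : r ≠ 0) (hr1 : r + 1 ≠ 0) (hrt : r ≠ t) (hu : u ≠ 0)
    (h : r ^ 2 * (u - 1) = u - t ^ 2) : logArg t r = (t + r) ^ 2 / (u * (r + 1) ^ 2) := by
  have hrt' : r - t ≠ 0 := sub_ne_zero.mpr hrt
  rw [logArg]
  field_simp
  linear_combination (t + r) * h

lemma neg_cMinus_pos {D s : ℝ} (hs : 0 < s) (hsD : s < |D|) : 0 < -cMinus D s := by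
  rw [cMinus, ← neg_div, neg_sub]
  rcases lt_abs.mp hsD with hD | hD
  · exact div_pos (sub_pos.mpr (exp_lt_exp.mpr (by linarith)))
      (sub_pos.mpr (one_lt_exp_iff.mpr (by linarith)))
  · exact div_pos_of_neg_of_neg (sub_neg.mpr (exp_lt_exp.mpr (by linarith)))
      (sub_neg.mpr (exp_lt_one_iff.mpr (by linarith)))

lemma continuousAt_cMinus {D : ℝ} (hD : D ≠ 0) : ContinuousAt (cMinus D) 0 := by
  refine ContinuousAt.div (by fun_prop) (by fun_prop) ?_
  simpa [sub_eq_zero] using hD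

lemma cMinus_zero {D : ℝ} (hD : D ≠ 0) : cMinus D 0 = -1 := by
  have : exp D - 1 ≠ 0 := by simpa [sub_eq_zero] using hD
  rw [cMinus, mul_zero, exp_zero, add_zero, ← neg_sub, neg_div, div_self this]

lemma logArg_exp_sqrt_neg_cMinus {D s : ℝ} (hs : 0 < s) (hsD : s < |D|) :
    logArg (exp s) √(-cMinus D s) =
      (exp s + √(-cMinus D s)) ^ 2 / (exp (D + s) * (√(-cMinus D s) + 1) ^ 2) := by
  have hC := neg_cMinus_pos hs hsD
  have hu : exp (D + s) - 1 ≠ 0 := by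
    intro h; simp [cMinus, h] at hC
  have hsq : √(-cMinus D s) ^ 2 * (exp (D + s) - 1) = exp (D + s) - exp s ^ 2 := by
    rw [sq_sqrt hC.le, cMinus, ← exp_nat_mul]
    field_simp
    ring_nf
  have hr := sqrt_pos.mpr hC
  have hrt : √(-cMinus D s) ≠ exp s := by
    intro h
    rw [h] at hsq
    have : 1 < exp s ^ 2 := one_lt_pow₀ (one_lt_exp_iff.mpr hs) two_ne_zero
    nlinarith [exp_pos (D + s)]
  exact logArg_eq_of_sq_mul hr.ne' (by positivity) hrt (exp_pos _).ne' hsq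

lemma tendsto_abs_log_logArg {D : ℝ} (hD : D ≠ 0) :
    Tendsto (fun s => |log (logArg (exp s) √(-cMinus D s))|) (𝓝[>] 0) (𝓝 |D|) := by
  have hr : ContinuousAt (fun s => √(-cMinus D s)) 0 :=
    (continuousAt_cMinus hD).neg.sqrt
  have hr0 : √(-cMinus D 0) = 1 := by rw [cMinus_zero hD, neg_neg, sqrt_one]
  have hcont : ContinuousAt (fun s => |log ((exp s + √(-cMinus D s)) ^ 2 /
      (exp (D + s) * (√(-cMinus D s) + 1) ^ 2))|) 0 := by
    refine ((ContinuousAt.div (by fun_prop) (by fun_prop) ?_).log ?_).abs <;> simp [hr0]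
  have hval : |log ((exp 0 + √(-cMinus D 0)) ^ 2 / (exp (D + 0) * (√(-cMinus D 0) + 1) ^ 2))|
      = |D| := by
    rw [hr0, exp_zero, add_zero, div_mul_eq_div_div_swap, div_self (by norm_num), one_div,
      log_inv, log_exp, abs_neg]
  rw [← hval]
  refine (hcont.tendsto.mono_left nhdsWithin_le_nhds).congr' ?_
  filter_upwards [Ioo_mem_nhdsGT (abs_pos.mpr hD)] with s ⟨hs, hsD⟩
  rw [logArg_exp_sqrt_neg_cMinus hs hsD]

lemma tendsto_sqrt_mul_neg_nhdsGT {c : ℝ} (hc : 0 < c) :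
    Tendsto (fun x => √(c * -x)) (𝓝[<] 0) (𝓝[>] 0) := by
  refine tendsto_nhdsWithin_iff.mpr ⟨?_, ?_⟩
  · have : ContinuousAt (fun x : ℝ => √(c * -x)) 0 := by fun_prop
    simpa using this.tendsto.mono_left nhdsWithin_le_nhds
  · filter_upwards [self_mem_nhdsWithin] with x hx
    exact sqrt_pos.mpr (mul_pos hc (neg_pos.mpr hx))

theorem stmt_10 (d : ℕ) (hd : 2 ≤ d) (D : ℝ) (hD : D ≠ 0) :
    Filter.Tendsto
      (fun lam : ℝ =>
        |Real.log
          (((Real.exp (Real.sqrt (d * (-lam))) /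
                Real.sqrt (-((Real.exp (2 * Real.sqrt (d * (-lam))) -
                    Real.exp (D + Real.sqrt (d * (-lam)))) /
                  (Real.exp (D + Real.sqrt (d * (-lam))) - 1))) + 1) *
              (-1 / Real.sqrt (-((Real.exp (2 * Real.sqrt (d * (-lam))) -
                    Real.exp (D + Real.sqrt (d * (-lam)))) /
                  (Real.exp (D + Real.sqrt (d * (-lam))) - 1))) + 1)) /
            ((1 - Real.exp (Real.sqrt (d * (-lam))) /
                Real.sqrt (-((Real.exp (2 * Real.sqrt (d * (-lam))) -
                    Real.exp (D + Real.sqrt (d * (-lam)))) /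
                  (Real.exp (D + Real.sqrt (d * (-lam))) - 1)))) *
              (1 + 1 / Real.sqrt (-((Real.exp (2 * Real.sqrt (d * (-lam))) -
                    Real.exp (D + Real.sqrt (d * (-lam)))) /
                  (Real.exp (D + Real.sqrt (d * (-lam))) - 1))))))|)
      (nhdsWithin 0 (Set.Iio 0)) (nhds |D|) :=
  (tendsto_abs_log_logArg hD).comp (tendsto_sqrt_mul_neg_nhdsGT (by positivity))
end

section
/- Let d ≥ 2 and D > 0. With C_+ = C_+(λ) = arctan((cos√(dλ) - e^D)/sin√(dλ)) for λ ∈ (0, π²/d), one has lim_{λ → 0⁺} (sin(C_+ + √(dλ)) + 1)/(sin(C_+) + 1) = e^{2D}. -/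
/-!
Write `θ = arctan ((cos t - E) / sin t)` with `E = exp D > 1` and `0 < t < π`. Since
`sin θ · sin t = (cos t - E) · cos θ`, the addition formula gives `cos (θ + t) = E · cos θ`.
Using `1 + sin x = cos² x / (1 - sin x)` the ratio becomes
`E² · (1 - sin θ) / (1 - sin (θ + t))`, which is no longer indeterminate: as `t → 0⁺`,
`(cos t - E) / sin t → -∞`, so `θ → -π/2` and both sines tend to `-1`.
-/

open Real Filter Topology

lemma cos_arctan_add_eq_mul_cos_arctan {t : ℝ} (E : ℝ) (ht : sin t ≠ 0) :
    cos (arctan ((cos t - E) / sin t) + t) = E * cos (arctan ((cos t - E) / sin t)) := by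
  set u := (cos t - E) / sin t with hu
  have hsin : sin (arctan u) = u * cos (arctan u) := by
    rw [sin_arctan, cos_arctan]
    ring
  rw [cos_add, hsin, hu]
  field_simp
  ring

lemma sin_add_one_mul_one_sub_sin (z : ℝ) : (sin z + 1) * (1 - sin z) = cos z ^ 2 := by
  linear_combination -sin_sq_add_cos_sq z

lemma sin_add_one_div_sin_add_one {x y : ℝ} (hx : cos x ≠ 0) (hy : cos y ≠ 0) :
    (sin y + 1) / (sin x + 1) = (cos y / cos x) ^ 2 * ((1 - sin x) / (1 - sin y)) := by
  have hx' : (sin x + 1) * (1 - sin x) ≠ 0 := sin_add_one_mul_one_sub_sin x ▸ pow_ne_zero 2 hx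
  have hy' : (sin y + 1) * (1 - sin y) ≠ 0 := sin_add_one_mul_one_sub_sin y ▸ pow_ne_zero 2 hy
  rw [div_pow, ← sin_add_one_mul_one_sub_sin x, ← sin_add_one_mul_one_sub_sin y]
  field_simp [left_ne_zero_of_mul hx', right_ne_zero_of_mul hx', right_ne_zero_of_mul hy']

lemma tendsto_arctan_cos_sub_div_sin {E : ℝ} (hE : 1 < E) :
    Tendsto (fun t => arctan ((cos t - E) / sin t)) (𝓝[>] 0) (𝓝 (-(π / 2))) := by
  have hsin : Tendsto sin (𝓝[>] 0) (𝓝[>] 0) := by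
    refine tendsto_nhdsWithin_iff.mpr ⟨?_, ?_⟩
    · exact (continuous_sin.tendsto' 0 0 sin_zero).mono_left nhdsWithin_le_nhds
    · filter_upwards [Ioo_mem_nhdsGT pi_pos] with t ht
      exact sin_pos_of_pos_of_lt_pi ht.1 ht.2
  have hcos : Tendsto (fun t => cos t - E) (𝓝[>] 0) (𝓝 (1 - E)) :=
    ((continuous_cos.sub continuous_const).tendsto' 0 (1 - E) (by simp)).mono_left
      nhdsWithin_le_nhds
  have hquot : Tendsto (fun t => (cos t - E) / sin t) (𝓝[>] 0) atBot := by
    simpa only [div_eq_mul_inv, Function.comp_def] using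
      hcos.neg_mul_atTop (by linarith) (tendsto_inv_nhdsGT_zero.comp hsin)
  exact (tendsto_arctan_atBot.mono_right nhdsWithin_le_nhds).comp hquot

lemma tendsto_sin_arctan_add_div_sin_arctan {E : ℝ} (hE : 1 < E) :
    Tendsto (fun t => (sin (arctan ((cos t - E) / sin t) + t) + 1) /
      (sin (arctan ((cos t - E) / sin t)) + 1)) (𝓝[>] 0) (𝓝 (E ^ 2)) := by
  set θ := fun t => arctan ((cos t - E) / sin t)
  have hθ : Tendsto θ (𝓝[>] 0) (𝓝 (-(π / 2))) := tendsto_arctan_cos_sub_div_sin hE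
  have hθt : Tendsto (fun t => θ t + t) (𝓝[>] 0) (𝓝 (-(π / 2))) := by
    simpa using hθ.add (tendsto_id.mono_left nhdsWithin_le_nhds)
  have one_sub_sin : ∀ {f : ℝ → ℝ}, Tendsto f (𝓝[>] 0) (𝓝 (-(π / 2))) →
      Tendsto (fun t => 1 - sin (f t)) (𝓝[>] 0) (𝓝 2) := fun hf =>
    ((continuous_const.sub continuous_sin).tendsto' _ 2 (by norm_num)).comp hf
  have hlim : Tendsto (fun t => E ^ 2 * ((1 - sin (θ t)) / (1 - sin (θ t + t))))
      (𝓝[>] 0) (𝓝 (E ^ 2)) := by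
    simpa using tendsto_const_nhds.mul ((one_sub_sin hθ).div (one_sub_sin hθt) two_ne_zero)
  refine hlim.congr' ?_
  filter_upwards [Ioo_mem_nhdsGT pi_pos] with t ht
  have hcos := cos_arctan_add_eq_mul_cos_arctan E (sin_pos_of_pos_of_lt_pi ht.1 ht.2).ne'
  have hθ₀ : cos (θ t) ≠ 0 := (cos_arctan_pos _).ne'
  rw [sin_add_one_div_sin_add_one hθ₀ (by rw [hcos]; exact mul_ne_zero (by linarith) hθ₀), hcos,
    mul_div_cancel_right₀ E hθ₀]

lemma tendsto_sqrt_const_mul_nhdsGT_zero {c : ℝ} (hc : 0 < c) :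
    Tendsto (fun x => √(c * x)) (𝓝[>] 0) (𝓝[>] 0) := by
  refine tendsto_nhdsWithin_iff.mpr ⟨?_, ?_⟩
  · exact ((continuous_const.mul continuous_id).sqrt.tendsto' 0 0 (by simp)).mono_left
      nhdsWithin_le_nhds
  · filter_upwards [self_mem_nhdsWithin] with x hx
    exact sqrt_pos.mpr (mul_pos hc hx)

theorem stmt_11 (d : ℕ) (hd : 2 ≤ d) (D : ℝ) (hD : 0 < D) :
    Filter.Tendsto
      (fun lam : ℝ =>
        (Real.sin (Real.arctan ((Real.cos (Real.sqrt (d * lam)) - Real.exp D) /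
            Real.sin (Real.sqrt (d * lam))) + Real.sqrt (d * lam)) + 1) /
        (Real.sin (Real.arctan ((Real.cos (Real.sqrt (d * lam)) - Real.exp D) /
            Real.sin (Real.sqrt (d * lam)))) + 1))
      (nhdsWithin 0 (Set.Ioi 0)) (nhds (Real.exp (2 * D))) := by
  have hd₀ : (0 : ℝ) < d := by exact_mod_cast (by omega : 0 < d)
  rw [two_mul, exp_add, ← sq]
  exact (tendsto_sin_arctan_add_div_sin_arctan (one_lt_exp_iff.mpr hD)).comp
    (tendsto_sqrt_const_mul_nhdsGT_zero hd₀)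
end

section
/- Let d ≥ 2, D ∈ ℝ, and λ ∈ (0, π²/d). Set C = arctan((cos√(dλ) - e^D)/sin√(dλ)). Then tan(C + √(dλ) r) + sec(C + √(dλ) r) > 0 for all r ∈ [0,1]. -/
/-!
Write `θ = C + s r` with `s = √(dλ) ∈ (0, π)`. Since `tan θ + sec θ = (1 + sin θ) / cos θ`, it suffices
that `θ ∈ (-π/2, π/2)`. The lower bound holds because `C` is an arctangent and `s r ≥ 0`. For the upper
bound, `cot s = tan (π/2 - s)` and `e^D > 0` give `C < arctan (cot s) = π/2 - s`, and `s r ≤ s`.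
-/

open Real Set

lemma Real.tan_add_one_div_cos_pos {θ : ℝ} (hθ : θ ∈ Ioo (-(π / 2)) (π / 2)) :
    0 < tan θ + 1 / cos θ := by
  have hcos : 0 < cos θ := cos_pos_of_mem_Ioo hθ
  have hsin : -1 < sin θ := by
    simpa using sin_lt_sin_of_lt_of_le_pi_div_two (by linarith [pi_pos]) hθ.2.le hθ.1
  rw [tan_eq_sin_div_cos, ← add_div]
  exact div_pos (by linarith) hcos

lemma Real.arctan_cos_div_sin {s : ℝ} (hs₀ : 0 < s) (hsπ : s < π) :
    arctan (cos s / sin s) = π / 2 - s := by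
  rw [← sin_pi_div_two_sub s, ← cos_pi_div_two_sub s, ← tan_eq_sin_div_cos]
  exact arctan_tan (by linarith) (by linarith)

lemma Real.arctan_cos_sub_div_sin_lt {s a : ℝ} (hs₀ : 0 < s) (hsπ : s < π) (ha : 0 < a) :
    arctan ((cos s - a) / sin s) < π / 2 - s := by
  rw [← arctan_cos_div_sin hs₀ hsπ]
  refine arctan_strictMono ?_
  exact (div_lt_div_iff_of_pos_right (sin_pos_of_pos_of_lt_pi hs₀ hsπ)).mpr (sub_lt_self _ ha)

lemma Real.sqrt_mul_mem_Ioo_zero_pi {d lam : ℝ} (hlam : 0 < lam) (hlam' : lam < π ^ 2 / d) :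
    √(d * lam) ∈ Ioo 0 π := by
  have hd : 0 < d := by
    by_contra! h
    linarith [div_nonpos_of_nonneg_of_nonpos (sq_nonneg π) h]
  refine ⟨sqrt_pos.mpr (by positivity), ?_⟩
  rw [← sqrt_sq pi_pos.le]
  exact sqrt_lt_sqrt (by positivity) (by rwa [← lt_div_iff₀' hd])

theorem stmt_13_general (d : ℕ) (D lam : ℝ)
    (hlam : 0 < lam) (hlam' : lam < Real.pi ^ 2 / d)
    (s : ℝ) (hs : s = Real.sqrt (d * lam))
    (C : ℝ) (hC : C = Real.arctan ((Real.cos s - Real.exp D) / Real.sin s)) :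
    ∀ r ∈ Set.Icc (0:ℝ) 1,
      0 < Real.tan (C + s * r) + 1 / Real.cos (C + s * r) := by
  obtain ⟨hs₀, hsπ⟩ : s ∈ Ioo 0 π := hs ▸ sqrt_mul_mem_Ioo_zero_pi hlam hlam'
  have hC_lt : C < π / 2 - s := hC ▸ arctan_cos_sub_div_sin_lt hs₀ hsπ (exp_pos D)
  have hC_gt : -(π / 2) < C := hC ▸ neg_pi_div_two_lt_arctan _
  rintro r ⟨hr₀, hr₁⟩
  have hsr₀ : 0 ≤ s * r := mul_nonneg hs₀.le hr₀
  have hsr₁ : s * r ≤ s := mul_le_of_le_one_right hs₀.le hr₁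
  exact tan_add_one_div_cos_pos ⟨by linarith, by linarith⟩

theorem stmt_13 (d : ℕ) (hd : 2 ≤ d) (D lam : ℝ)
    (hlam : 0 < lam) (hlam' : lam < Real.pi ^ 2 / d)
    (s : ℝ) (hs : s = Real.sqrt (d * lam))
    (C : ℝ) (hC : C = Real.arctan ((Real.cos s - Real.exp D) / Real.sin s)) :
    ∀ r ∈ Set.Icc (0:ℝ) 1,
      0 < Real.tan (C + s * r) + 1 / Real.cos (C + s * r) :=
  stmt_13_general d D lam hlam hlam' s hs C hC
end

section
/- Let d ≥ 2 and let D₁, ..., D_d ∈ ℝ with D = Σ_i D_i. Suppose λ ∈ ℝ and L : [0,1] → ℝ^d is C¹ with L_i' = -(Σ_k L_k)·L_i - λ, ∫₀¹ L_i = D_i for each i, and Σ_i L_i(0)² - (Σ_i L_i(0))² = (d-1)λ. Then λ ∈ [-D²/d, π²/d). -/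
open Real Set

/-- sign preservation for linear ODE f' = a f on [0,1] -/
lemma my_sign_preserve {f a : ℝ → ℝ} (hf : ContinuousOn f (Set.Icc 0 1))
    (ha : ContinuousOn a (Set.Icc 0 1))
    (hd : ∀ r ∈ Set.Icc (0:ℝ) 1, HasDerivWithinAt f (a r * f r) (Set.Icc 0 1) r)
    (h0 : 0 ≤ f 0) : ∀ r ∈ Set.Icc (0:ℝ) 1, 0 ≤ f r := by
  by_contra h
  push_neg at h
  obtain ⟨r0, hr0, hfr0⟩ := h
  have hsub : Set.Icc (0:ℝ) r0 ⊆ Set.Icc 0 1 := Set.Icc_subset_Icc le_rfl hr0.2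
  have h0mem : (0:ℝ) ∈ Set.Icc (f r0) (f 0) := ⟨hfr0.le, h0⟩
  obtain ⟨r1, hr1, hfr1⟩ := intermediate_value_Icc' hr0.1 (hf.mono hsub) h0mem
  obtain ⟨K, hK⟩ := isCompact_Icc.exists_bound_of_continuousOn ha
  have hr1m : r1 ∈ Set.Icc (0:ℝ) 1 := hsub hr1
  have key := norm_le_gronwallBound_of_norm_deriv_right_le (a := r1) (b := r0)
    (δ := 0) (K := K) (ε := 0) (f := f) (f' := fun x => a x * f x)
    (hf.mono (Set.Icc_subset_Icc hr1m.1 hr0.2))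
    (fun x hx => by
      have hx01 : x ∈ Set.Ico (0:ℝ) 1 := ⟨hr1m.1.trans hx.1, lt_of_lt_of_le hx.2 hr0.2⟩
      exact (hd x ⟨hx01.1, hx01.2.le⟩).mono_of_mem_nhdsWithin
        (Icc_mem_nhdsGE_of_mem hx01))
    (by simp [hfr1])
    (fun x hx => by
      have hx01 : x ∈ Set.Icc (0:ℝ) 1 := ⟨hr1m.1.trans hx.1, hx.2.le.trans hr0.2⟩
      have h1 : ‖a x * f x‖ = ‖a x‖ * ‖f x‖ := norm_mul _ _
      have h2 : ‖a x‖ * ‖f x‖ ≤ K * ‖f x‖ :=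
        mul_le_mul_of_nonneg_right (hK x hx01) (norm_nonneg _)
      rw [h1]; linarith)
  have hkey := key r0 ⟨hr1.2, le_rfl⟩
  rw [gronwallBound_ε0_δ0] at hkey
  have : f r0 = 0 := by simpa [norm_le_zero_iff] using hkey
  linarith

theorem stmt_14 (d : ℕ) (hd : 2 ≤ d) (Di : Fin d → ℝ) (D lam : ℝ)
    (hD : D = ∑ i, Di i)
    (L : Fin d → ℝ → ℝ)
    (hC1 : ∀ i, ContDiffOn ℝ 1 (L i) (Set.Icc 0 1))
    (hode : ∀ i, ∀ r ∈ Set.Icc (0:ℝ) 1,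
      HasDerivWithinAt (L i) (-(∑ k, L k r) * L i r - lam) (Set.Icc 0 1) r)
    (hint : ∀ i, ∫ r in (0:ℝ)..1, L i r = Di i)
    (hconstraint : (∑ i, (L i 0) ^ 2) - (∑ i, L i 0) ^ 2 = (d - 1) * lam) :
    -D ^ 2 / d ≤ lam ∧ lam < Real.pi ^ 2 / d := by
  have hd0 : (0:ℝ) < d := by positivity
  have hd1' : (0:ℝ) < (d:ℝ) - 1 := by
    have : (2:ℝ) ≤ d := by exact_mod_cast hd
    linarith
  set S : ℝ → ℝ := fun r => ∑ i, L i r with hSdef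
  have hS0eq : S 0 = ∑ i, L i 0 := rfl
  have hScont : ContinuousOn S (Set.Icc 0 1) := by
    apply continuousOn_finset_sum
    intro i _
    exact (hC1 i).continuousOn
  have hS' : ∀ r ∈ Set.Icc (0:ℝ) 1,
      HasDerivWithinAt S (-(S r)^2 - d * lam) (Set.Icc 0 1) r := by
    intro r hr
    have := HasDerivWithinAt.fun_sum (fun i (_ : i ∈ Finset.univ) => hode i r hr)
    refine this.congr_deriv ?_
    rw [Finset.sum_sub_distrib, ← Finset.mul_sum, Finset.sum_const, Finset.card_univ,
      Fintype.card_fin]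
    simp only [hSdef]
    ring
  have hSint : ∫ r in (0:ℝ)..1, S r = D := by
    rw [hD]
    rw [intervalIntegral.integral_finset_sum]
    · exact Finset.sum_congr rfl fun i _ => hint i
    · intro i _
      exact ((hC1 i).continuousOn.mono (by rw [Set.uIcc_of_le] <;> norm_num)).intervalIntegrable
  have hSintegrable : IntervalIntegrable S MeasureTheory.volume 0 1 :=
    (hScont.mono (by rw [Set.uIcc_of_le] <;> norm_num)).intervalIntegrable
  constructor
  · -- lower bound
    rcases le_or_gt 0 lam with hl | hl
    · have : (0:ℝ) ≤ D^2/(d:ℝ) := by positivity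
      have h2 : -D^2/(d:ℝ) = -(D^2/(d:ℝ)) := by ring
      rw [h2]; linarith
    · -- lam < 0
      set c : ℝ := Real.sqrt (-(d * lam)) with hc
      have hdlam : 0 < -((d:ℝ)*lam) := by nlinarith
      have hc2 : c^2 = -((d:ℝ)*lam) := Real.sq_sqrt hdlam.le
      have hcpos : 0 < c := Real.sqrt_pos.mpr hdlam
      have hCS : (S 0)^2 ≤ (d:ℝ) * ∑ i, (L i 0)^2 := by
        have := sq_sum_le_card_mul_sum_sq (s := Finset.univ) (f := fun i => L i 0)
        rw [hS0eq]
        simpa [Finset.card_univ] using this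
      have hcon : ∑ i, (L i 0)^2 = ((d:ℝ)-1)*lam + (S 0)^2 := by
        rw [hS0eq]; linarith [hconstraint]
      have hS0sq : -((d:ℝ)*lam) ≤ (S 0)^2 := by nlinarith [hCS, hcon, hd1']
      have habs : c ≤ |S 0| := by
        rw [hc, ← Real.sqrt_sq_eq_abs]
        exact Real.sqrt_le_sqrt hS0sq
      have key : c ≤ |D| := by
        rcases abs_cases (S 0) with ⟨he, _⟩ | ⟨he, _⟩
        · -- S 0 ≥ c
          have hS0 : c ≤ S 0 := by rwa [he] at habs
          have hpos : ∀ r ∈ Set.Icc (0:ℝ) 1, 0 ≤ S r - c := by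
            apply my_sign_preserve (a := fun r => -(S r + c))
            · exact hScont.sub continuousOn_const
            · exact (hScont.add continuousOn_const).neg
            · intro r hr
              have hh := (hS' r hr).sub_const c
              refine hh.congr_deriv ?_
              have h1 : -(S r + c) * (S r - c) = -(S r)^2 + c^2 := by ring
              rw [h1, hc2]; ring
            · linarith
          have hDc : c ≤ D := by
            rw [← hSint]
            calc c = ∫ _ in (0:ℝ)..1, c := by simp
              _ ≤ ∫ r in (0:ℝ)..1, S r := by
                  apply intervalIntegral.integral_mono_on (by norm_num)
                    intervalIntegrable_const hSintegrable
                  intro x hx; linarith [hpos x hx]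
          exact hDc.trans (le_abs_self D)
        · -- S 0 ≤ -c
          have hS0 : S 0 ≤ -c := by rw [he] at habs; linarith
          have hpos : ∀ r ∈ Set.Icc (0:ℝ) 1, 0 ≤ -(S r) - c := by
            apply my_sign_preserve (a := fun r => c - S r)
            · exact hScont.neg.sub continuousOn_const
            · exact continuousOn_const.sub hScont
            · intro r hr
              have hh := ((hS' r hr).neg).sub_const c
              refine hh.congr_deriv ?_
              have h1 : (c - S r) * (-(S r) - c) = (S r)^2 - c^2 := by ring
              rw [h1, hc2]; ring
            · linarith
          have hDc : D ≤ -c := by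
            rw [← hSint]
            calc (∫ r in (0:ℝ)..1, S r) ≤ ∫ _ in (0:ℝ)..1, (-c:ℝ) := by
                  apply intervalIntegral.integral_mono_on (by norm_num)
                    hSintegrable intervalIntegrable_const
                  intro x hx; linarith [hpos x hx]
              _ = -c := by simp
          calc c ≤ -D := by linarith
            _ ≤ |D| := neg_le_abs D
      have hfin : -((d:ℝ)*lam) ≤ D^2 := by
        nlinarith [key, hcpos, hc2, sq_abs D, abs_nonneg D]
      rw [div_le_iff₀ hd0]
      linarith
  · -- upper bound
    by_contra hcon
    push_neg at hcon
    have hpi2 : Real.pi^2 ≤ d * lam := by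
      rw [div_le_iff₀ hd0] at hcon; linarith
    have hpip : 0 < Real.pi := Real.pi_pos
    set F : ℝ → ℝ := fun r => Real.arctan (S r / Real.pi) + Real.pi * r with hF
    have hanti : AntitoneOn F (Set.Icc 0 1) := by
      refine antitoneOn_of_hasDerivWithinAt_nonpos (convex_Icc 0 1)
        (f' := fun x => Real.pi * (Real.pi^2 - d*lam) / (Real.pi^2 + (S x)^2)) ?_ ?_ ?_
      · apply ContinuousOn.add
        · exact Real.continuous_arctan.comp_continuousOn (hScont.div_const _)
        · exact (continuous_const.mul continuous_id).continuousOn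
      · intro x hx
        rw [interior_Icc] at hx ⊢
        have hxIcc : x ∈ Set.Icc (0:ℝ) 1 := Set.Ioo_subset_Icc_self hx
        have h1 : HasDerivWithinAt (fun r => S r / Real.pi)
            ((-(S x)^2 - d*lam) / Real.pi) (Set.Ioo 0 1) x :=
          ((hS' x hxIcc).mono Set.Ioo_subset_Icc_self).div_const _
        have h2 := (Real.hasDerivAt_arctan (S x / Real.pi)).comp_hasDerivWithinAt x h1
        have h3 : HasDerivWithinAt (fun r => Real.pi * r) Real.pi (Set.Ioo 0 1) x := by
          simpa using ((hasDerivAt_id x).const_mul Real.pi).hasDerivWithinAt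
        have h4 := h2.add h3
        refine h4.congr_deriv ?_
        have hne : Real.pi^2 + (S x)^2 ≠ 0 := by positivity
        field_simp
        ring
      · intro x _
        apply div_nonpos_of_nonpos_of_nonneg
        · nlinarith
        · positivity
    have hle := hanti (Set.left_mem_Icc.mpr (by norm_num)) (Set.right_mem_Icc.mpr (by norm_num)) (by norm_num)
    simp only [hF, mul_one, mul_zero, add_zero] at hle
    have h1 : Real.arctan (S 0 / Real.pi) < Real.pi / 2 := Real.arctan_lt_pi_div_two _
    have h2 : -(Real.pi/2) < Real.arctan (S 1 / Real.pi) := Real.neg_pi_div_two_lt_arctan _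
    linarith
end

section
/- Let μ > 0 and let f₁, f₂ : [0,1] → (0,∞) be C² functions satisfying f₂''/f₂ - (f₁'f₂')/(f₁f₂) = 0 and f₁''/f₁ - (f₂')²/f₂² + μ/f₂² = 0 on [0,1]. If f₂(0) = f₂(1), then f₂ is constant on [0,1], and f₁ satisfies f₁'' + (μ/f₂(0)²)f₁ = 0. -/
/-!
The first equation says that `f₂''` times `f₁` equals `f₂'` times `f₁'`, i.e. `(f₂' / f₁)' = 0`, so
`f₂'` is a constant multiple of the positive function `f₁`. By Rolle, `f₂(0) = f₂(1)` forces `f₂'`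
to vanish somewhere, hence everywhere, so `f₂` is constant and the second equation collapses to
`f₁'' / f₁ + μ / f₂(0)² = 0`.
-/

open Real Set

theorem exists_mem_Ioo_derivWithin_Icc_eq_zero {a b : ℝ} {f : ℝ → ℝ} (hab : a < b)
    (hf : DifferentiableOn ℝ f (Icc a b)) (hfab : f a = f b) :
    ∃ c ∈ Ioo a b, derivWithin f (Icc a b) c = 0 := by
  obtain ⟨c, hc, hc'⟩ := exists_deriv_eq_zero hab hf.continuousOn hfab
  exact ⟨c, hc, by rwa [derivWithin_of_mem_nhds (Icc_mem_nhds hc.1 hc.2)]⟩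

-- `(g / f)' = 0`, so `g / f` is constant.
theorem eqOn_zero_of_wronskian_eq_zero {a b c : ℝ} {f g : ℝ → ℝ}
    (hf : DifferentiableOn ℝ f (Icc a b)) (hg : DifferentiableOn ℝ g (Icc a b))
    (hf₀ : ∀ x ∈ Icc a b, f x ≠ 0)
    (hW : ∀ x ∈ Icc a b,
      derivWithin g (Icc a b) x * f x - g x * derivWithin f (Icc a b) x = 0)
    (hc : c ∈ Icc a b) (hgc : g c = 0) : ∀ x ∈ Icc a b, g x = 0 := by
  have hquot : ∀ x ∈ Icc a b, g x / f x = g a / f a := by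
    refine constant_of_derivWithin_zero (hg.div hf hf₀) fun x hx => ?_
    have hx' := Ico_subset_Icc_self hx
    rw [derivWithin_fun_div (hg x hx') (hf x hx') (hf₀ x hx'), hW x hx', zero_div]
  intro x hx
  have hx₀ : g x / f x = 0 := by rw [hquot x hx, ← hquot c hc, hgc, zero_div]
  exact (div_eq_zero_iff.mp hx₀).resolve_right (hf₀ x hx)

theorem stmt_17_general (μ : ℝ) (f₁ f₂ : ℝ → ℝ)
    (hf₁ : ContDiffOn ℝ 2 f₁ (Set.Icc 0 1)) (hf₂ : ContDiffOn ℝ 2 f₂ (Set.Icc 0 1))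
    (hpos₁ : ∀ r ∈ Set.Icc (0:ℝ) 1, 0 < f₁ r)
    (hpos₂ : ∀ r ∈ Set.Icc (0:ℝ) 1, 0 < f₂ r)
    (heq1 : ∀ r ∈ Set.Icc (0:ℝ) 1,
      derivWithin (derivWithin f₂ (Set.Icc 0 1)) (Set.Icc 0 1) r / f₂ r -
        (derivWithin f₁ (Set.Icc 0 1) r * derivWithin f₂ (Set.Icc 0 1) r) /
          (f₁ r * f₂ r) = 0)
    (heq2 : ∀ r ∈ Set.Icc (0:ℝ) 1,
      derivWithin (derivWithin f₁ (Set.Icc 0 1)) (Set.Icc 0 1) r / f₁ r -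
        (derivWithin f₂ (Set.Icc 0 1) r) ^ 2 / (f₂ r) ^ 2 + μ / (f₂ r) ^ 2 = 0)
    (hbd : f₂ 0 = f₂ 1) :
    (∀ r ∈ Set.Icc (0:ℝ) 1, f₂ r = f₂ 0) ∧
    (∀ r ∈ Set.Icc (0:ℝ) 1,
      derivWithin (derivWithin f₁ (Set.Icc 0 1)) (Set.Icc 0 1) r +
        (μ / (f₂ 0) ^ 2) * f₁ r = 0) := by
  have hd₁ := hf₁.differentiableOn two_ne_zero
  have hd₂ := hf₂.differentiableOn two_ne_zero
  have hd₂' : DifferentiableOn ℝ (derivWithin f₂ (Icc 0 1)) (Icc 0 1) :=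
    (hf₂.derivWithin (uniqueDiffOn_Icc zero_lt_one) (by norm_num)).differentiableOn one_ne_zero
  have hW : ∀ r ∈ Icc (0:ℝ) 1, derivWithin (derivWithin f₂ (Icc 0 1)) (Icc 0 1) r * f₁ r -
      derivWithin f₂ (Icc 0 1) r * derivWithin f₁ (Icc 0 1) r = 0 := by
    intro r hr
    have h := heq1 r hr
    field_simp [(hpos₁ r hr).ne', (hpos₂ r hr).ne'] at h
    linarith
  obtain ⟨c, hc, hc'⟩ := exists_mem_Ioo_derivWithin_Icc_eq_zero zero_lt_one hd₂ hbd
  have hf₂' := eqOn_zero_of_wronskian_eq_zero hd₁ hd₂' (fun r hr => (hpos₁ r hr).ne') hW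
    (Ioo_subset_Icc_self hc) hc'
  have hf₂_const := constant_of_derivWithin_zero hd₂ fun r hr => hf₂' r (Ico_subset_Icc_self hr)
  refine ⟨hf₂_const, fun r hr => ?_⟩
  have h := heq2 r hr
  rw [hf₂' r hr, hf₂_const r hr, zero_pow two_ne_zero, zero_div, sub_zero] at h
  calc _ = (derivWithin (derivWithin f₁ (Icc 0 1)) (Icc 0 1) r / f₁ r + μ / f₂ 0 ^ 2) * f₁ r := by
        field_simp [(hpos₁ r hr).ne']
    _ = 0 := by rw [h, zero_mul]

theorem stmt_17 (μ : ℝ) (hμ : 0 < μ) (f₁ f₂ : ℝ → ℝ)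
    (hf₁ : ContDiffOn ℝ 2 f₁ (Set.Icc 0 1)) (hf₂ : ContDiffOn ℝ 2 f₂ (Set.Icc 0 1))
    (hpos₁ : ∀ r ∈ Set.Icc (0:ℝ) 1, 0 < f₁ r)
    (hpos₂ : ∀ r ∈ Set.Icc (0:ℝ) 1, 0 < f₂ r)
    (heq1 : ∀ r ∈ Set.Icc (0:ℝ) 1,
      derivWithin (derivWithin f₂ (Set.Icc 0 1)) (Set.Icc 0 1) r / f₂ r -
        (derivWithin f₁ (Set.Icc 0 1) r * derivWithin f₂ (Set.Icc 0 1) r) /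
          (f₁ r * f₂ r) = 0)
    (heq2 : ∀ r ∈ Set.Icc (0:ℝ) 1,
      derivWithin (derivWithin f₁ (Set.Icc 0 1)) (Set.Icc 0 1) r / f₁ r -
        (derivWithin f₂ (Set.Icc 0 1) r) ^ 2 / (f₂ r) ^ 2 + μ / (f₂ r) ^ 2 = 0)
    (hbd : f₂ 0 = f₂ 1) :
    (∀ r ∈ Set.Icc (0:ℝ) 1, f₂ r = f₂ 0) ∧
    (∀ r ∈ Set.Icc (0:ℝ) 1,
      derivWithin (derivWithin f₁ (Set.Icc 0 1)) (Set.Icc 0 1) r +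
        (μ / (f₂ 0) ^ 2) * f₁ r = 0) :=
  stmt_17_general μ f₁ f₂ hf₁ hf₂ hpos₁ hpos₂ heq1 heq2 hbd
end
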